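/- Let N ≥ 2 and let t_1⋯t_p be an admissible block with generalized Thue–Morse sequence (θ_i). Then for every n ≥ 0, the periodic sequence (θ_1⋯θ_{2^n p} θ̄_1⋯θ̄_{2^n p})^∞ (where θ̄_k = N−1−θ_k) is shift-maximal: every shift σ^i of it is lexicographically ≤ the sequence itself, for all i ≥ 1. -/

import Mathlib

/-- Reflection of a block: each digit `c` becomes `N - 1 - c`. -/
def reflB (N : ℕ) (w : List ℕ) : List ℕ := w.map (fun c => N - 1 - c)

/-- The block `w` with its last digit incremented by one. -/
def plusB (w : List ℕ) : List ℕ := w.dropLast ++ [w.getLast! + 1]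

/-- The `i`-th cyclic rotation of the block `w` (0-indexed). -/
def rotB (w : List ℕ) (i : ℕ) : List ℕ := w.drop i ++ w.take i

/-- The lexicographic inequalities defining admissibility of a block. -/
def AdmissibleIneq (N : ℕ) (w : List ℕ) : Prop :=
  ∀ i < w.length,
    reflB N w ≤ rotB w i ∧ plusB (w.drop i) ++ reflB N (w.take i) ≤ plusB w

/-- An admissible block in `{0, …, N-1}`. -/
def Admissible (N : ℕ) (w : List ℕ) : Prop :=
  w ≠ [] ∧ (∀ c ∈ w, c < N) ∧ w.getLast! < N - 1 ∧ AdmissibleIneq N w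

/-- Prefixes of the generalized Thue–Morse sequence generated by `plusB w`:
`gtmBlock N w n` is the prefix `θ_1 ⋯ θ_{2^n p}`. -/
def gtmBlock (N : ℕ) (w : List ℕ) : ℕ → List ℕ
  | 0 => plusB w
  | n + 1 => gtmBlock N w n ++ plusB (reflB N (gtmBlock N w n))

/-- The generalized Thue–Morse sequence generated by `plusB w`, 0-indexed:
`gtm N w n = θ_{n+1}`. -/
def gtm (N : ℕ) (w : List ℕ) : ℕ → ℕ := fun n => (gtmBlock N w n).getD n 0

/-- Strict lexicographic order on infinite sequences of digits. -/
def seqLt (a b : ℕ → ℕ) : Prop := ∃ n, (∀ k < n, a k = b k) ∧ a n < b n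

/-- Lexicographic order on infinite sequences of digits. -/
def seqLe (a b : ℕ → ℕ) : Prop := seqLt a b ∨ a = b

/-- Shift of a sequence by `k` places. -/
def shift (a : ℕ → ℕ) (k : ℕ) : ℕ → ℕ := fun n => a (n + k)

/-- The periodic sequence `w^∞` obtained by repeating the block `w`. -/
def per (w : List ℕ) : ℕ → ℕ := fun n => w.getD (n % w.length) 0

/-- Reflection of an infinite sequence. -/
def reflSeq (N : ℕ) (a : ℕ → ℕ) : ℕ → ℕ := fun n => N - 1 - a n

/-- The classical Thue–Morse sequence: parity of the binary digit sum. -/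
def tm (i : ℕ) : ℕ := (Nat.digits 2 i).sum % 2

/-- Number of length-`n` words appearing in sequences of `Z`. -/
noncomputable def wordCount (Z : Set (ℕ → ℕ)) (n : ℕ) : ℕ :=
  Set.ncard { u : List ℕ | u.length = n ∧ ∃ d ∈ Z, ∀ k < n, u.getD k 0 = d k }

/-- `Z` has topological entropy `h`. -/
def hasEntropy (Z : Set (ℕ → ℕ)) (h : ℝ) : Prop :=
  Filter.Tendsto (fun n : ℕ => Real.log (wordCount Z n) / n) Filter.atTop (nhds h)

/-!
Write `V⁺` for `plusB V`, `V̄` for `reflB N V` and `D w = w⁺ (w⁺)‾` for `doubleB N w`. Since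
`θ_1⋯θ_{2^{n+1}p} = (θ_1⋯θ_{2^n p} θ̄_1⋯θ̄_{2^n p})⁺`, the block in question is `D^{n+1} w`.

The doubling `D` preserves admissibility. For a cut `D w = x y`, the plus-inequality
`y⁺ x̄ ≤ (D w)⁺ = w⁺ w̄` reduces to the plus-inequality of `w` (strict for proper cuts) when the cut
lies in `w⁺`, and to "every rotation of `w̄` is `≤ w`" when it lies in `(w⁺)‾`. The reflection
inequalities of `D w` follow from its rotation-maximality, because the reflection of a rotation of
`v v̄` is again a rotation of `v v̄`.

Finally, for an admissible `V` every rotation `y x` satisfies `y x < y⁺ x̄ ≤ V⁺`, hence `y x ≤ V`,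
and the shifts of `V^∞` are the sequences `(y x)^∞`.
-/

namespace List

variable {α : Type*} [LT α]

theorem append_lt_append_iff_of_length_eq {x y : List α} (u v : List α)
    (h : x.length = y.length) : x ++ u < y ++ v ↔ x < y ∨ x = y ∧ u < v := by
  induction x generalizing y with
  | nil =>
    obtain rfl : y = [] := length_eq_zero_iff.1 h.symm
    simp
  | cons a x ih =>
    obtain ⟨b, y, rfl⟩ := exists_cons_of_length_eq_add_one h.symm
    simp only [cons_append, cons_lt_cons_iff, ih (by simpa using h), cons.injEq]
    tauto

theorem append_lt_append_of_lt {x y : List α} (u v : List α) (h : x.length = y.length)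
    (hxy : x < y) : x ++ u < y ++ v :=
  (append_lt_append_iff_of_length_eq u v h).2 (Or.inl hxy)

end List

open List

@[simp] theorem plusB_concat (U : List ℕ) (b : ℕ) : plusB (U ++ [b]) = U ++ [b + 1] := by
  simp [plusB]

theorem plusB_ne_nil (V : List ℕ) : plusB V ≠ [] := by
  simp [plusB]

theorem length_plusB {V : List ℕ} (hV : V ≠ []) : (plusB V).length = V.length := by
  obtain ⟨U, b, rfl⟩ := (eq_nil_or_concat' V).resolve_left hV
  simp

theorem plusB_append (x : List ℕ) {V : List ℕ} (hV : V ≠ []) :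
    plusB (x ++ V) = x ++ plusB V := by
  obtain ⟨U, b, rfl⟩ := (eq_nil_or_concat' V).resolve_left hV
  rw [← append_assoc, plusB_concat, plusB_concat, append_assoc]

theorem lt_plusB (V : List ℕ) : V < plusB V := by
  rcases eq_nil_or_concat' V with rfl | ⟨U, b, rfl⟩
  · simp [plusB]
  · simpa using append_left_lt (l₁ := U) (by simp [cons_lt_cons_iff] : [b] < [b + 1])

theorem lt_plusB_iff_le {x y : List ℕ} (h : x.length = y.length) : x < plusB y ↔ x ≤ y := by
  refine ⟨fun hlt => ?_, fun hle => lt_of_le_of_lt hle (lt_plusB y)⟩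
  rcases eq_nil_or_concat' y with rfl | ⟨U, b, rfl⟩
  · simp_all
  obtain ⟨X, a, rfl⟩ :=
    (eq_nil_or_concat' x).resolve_left (ne_nil_of_length_eq_add_one (by simpa using h))
  have hXU : X.length = U.length := by simpa using h
  rw [plusB_concat, append_lt_append_iff_of_length_eq _ _ hXU] at hlt
  rcases hlt with hlt | ⟨rfl, hab⟩
  · exact le_of_lt (append_lt_append_of_lt _ _ hXU hlt)
  · have hab : a < b + 1 := by simpa [cons_lt_cons_iff] using hab
    rcases (Nat.lt_succ_iff.1 hab).lt_or_eq with hab | rfl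
    · exact le_of_lt (append_left_lt (by simpa [cons_lt_cons_iff] using hab))
    · exact le_rfl

theorem exists_of_plusB_eq_append {V x c : List ℕ} (hV : V ≠ []) (h : plusB V = x ++ c)
    (hc : c ≠ []) : ∃ d, d ≠ [] ∧ V = x ++ d ∧ plusB d = c := by
  obtain ⟨U, b, rfl⟩ := (eq_nil_or_concat' V).resolve_left hV
  obtain ⟨c₀, e, rfl⟩ := (eq_nil_or_concat' c).resolve_left hc
  rw [plusB_concat, ← append_assoc] at h
  obtain ⟨rfl, he⟩ := append_inj' h rfl
  obtain rfl : e = b + 1 := by simpa [eq_comm] using he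
  exact ⟨c₀ ++ [b], by simp, by rw [append_assoc], by simp⟩

@[simp] theorem length_reflB (N : ℕ) (V : List ℕ) : (reflB N V).length = V.length :=
  length_map _

@[simp] theorem reflB_append (N : ℕ) (x y : List ℕ) :
    reflB N (x ++ y) = reflB N x ++ reflB N y :=
  map_append

@[simp] theorem reflB_eq_nil {N : ℕ} {V : List ℕ} : reflB N V = [] ↔ V = [] :=
  map_eq_nil_iff

theorem le_of_mem_reflB {N c : ℕ} {V : List ℕ} (h : c ∈ reflB N V) : c ≤ N - 1 := by
  obtain ⟨a, -, rfl⟩ := mem_map.1 h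
  omega

theorem reflB_reflB {N : ℕ} {V : List ℕ} (hV : ∀ c ∈ V, c ≤ N - 1) :
    reflB N (reflB N V) = V := by
  rw [reflB, reflB, map_map]
  refine map_congr_left (fun c hc => ?_) |>.trans (map_id V)
  have := hV c hc
  simp only [Function.comp_apply, id]
  omega

theorem reflB_lt_reflB {N : ℕ} {x y : List ℕ} (hlen : x.length = y.length)
    (hy : ∀ c ∈ y, c ≤ N - 1) (h : x < y) : reflB N y < reflB N x := by
  induction x generalizing y with
  | nil =>
    obtain rfl := length_eq_zero_iff.1 hlen.symm
    exact absurd h (List.lt_irrefl _)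
  | cons a x ih =>
    obtain ⟨b, y, rfl⟩ := exists_cons_of_length_eq_add_one hlen.symm
    have hb := hy b mem_cons_self
    simp only [reflB, map_cons, cons_lt_cons_iff] at h ⊢
    rcases h with h | ⟨rfl, h⟩
    · omega
    · exact Or.inr ⟨rfl, ih (by simpa using hlen) (fun c hc => hy c (mem_cons_of_mem _ hc)) h⟩

theorem reflB_le_reflB {N : ℕ} {x y : List ℕ} (hlen : x.length = y.length)
    (hy : ∀ c ∈ y, c ≤ N - 1) (h : x ≤ y) : reflB N y ≤ reflB N x := by
  rcases h.lt_or_eq with h | rfl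
  · exact le_of_lt (reflB_lt_reflB hlen hy h)
  · exact le_rfl

theorem plusB_reflB_plusB {N : ℕ} {V : List ℕ} (hV : V ≠ []) (hlast : V.getLast! < N - 1) :
    plusB (reflB N (plusB V)) = reflB N V := by
  obtain ⟨U, b, rfl⟩ := (eq_nil_or_concat' V).resolve_left hV
  have hb : b < N - 1 := by simpa using hlast
  simp only [reflB, plusB_concat, map_append, map_cons, map_nil, append_cancel_left_eq]
  congr 2
  omega

theorem rotate_le_of_plusB_swap_le {N : ℕ} {V : List ℕ}
    (h : ∀ x y, V = x ++ y → y ≠ [] → plusB y ++ reflB N x ≤ plusB V) (k : ℕ) :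
    V.rotate k ≤ V := by
  rcases eq_or_ne V [] with rfl | hV
  · simp
  set i := k % V.length
  have hy : V.drop i ≠ [] := by simpa [i] using Nat.mod_lt k (length_pos_iff.2 hV)
  rw [← lt_plusB_iff_le (length_rotate ..), rotate_eq_drop_append_take_mod]
  calc V.drop i ++ V.take i < plusB (V.drop i) ++ reflB N (V.take i) :=
        append_lt_append_of_lt _ _ (length_plusB hy).symm (lt_plusB _)
    _ ≤ plusB V := h _ _ (take_append_drop i V).symm hy

theorem reflB_le_rotate_of_rotate_le {N : ℕ} {v : List ℕ} (hv : ∀ c ∈ v, c ≤ N - 1)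
    (h : ∀ k, (v ++ reflB N v).rotate k ≤ v ++ reflB N v) (k : ℕ) :
    reflB N (v ++ reflB N v) ≤ (v ++ reflB N v).rotate k := by
  set V := v ++ reflB N v
  have hV : ∀ c ∈ V, c ≤ N - 1 := by
    simp only [V, mem_append]
    rintro c (hc | hc)
    exacts [hv c hc, le_of_mem_reflB hc]
  have hreflV : reflB N V = V.rotate v.length := by
    rw [rotate_append_length_eq, reflB_append, reflB_reflB hv]
  have hrot : V.rotate (v.length + k) = reflB N (V.rotate k) := by
    rw [← rotate_rotate, ← hreflV]
    exact (map_rotate _ _ _).symm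
  have := reflB_le_reflB (by simp) hV (h (v.length + k))
  rwa [hrot, reflB_reflB fun c hc => hV c (mem_rotate.1 hc)] at this

theorem admissibleIneq_iff {N : ℕ} {w : List ℕ} :
    AdmissibleIneq N w ↔ ∀ x y, w = x ++ y → y ≠ [] →
      reflB N w ≤ y ++ x ∧ plusB y ++ reflB N x ≤ plusB w := by
  constructor
  · rintro h x y rfl hy
    simpa [rotB] using h x.length (by simpa using length_pos_iff.2 hy)
  · intro h i hi
    exact h _ _ (take_append_drop i w).symm (by simpa using hi)

def doubleB (N : ℕ) (w : List ℕ) : List ℕ := plusB w ++ reflB N (plusB w)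

section Admissible

variable {N : ℕ} {w : List ℕ}

theorem Admissible.le_pred_of_mem (hw : Admissible N w) : ∀ c ∈ w, c ≤ N - 1 :=
  fun c hc => Nat.le_pred_of_lt (hw.2.1 c hc)

theorem Admissible.swap_le_of_reflB_eq_append (hw : Admissible N w) {c z : List ℕ}
    (h : reflB N w = c ++ z) (hz : z ≠ []) : z ++ c ≤ w := by
  have hsplit : w = reflB N c ++ reflB N z := by
    rw [← reflB_append, ← h, reflB_reflB hw.le_pred_of_mem]
  have hzc : ∀ a ∈ z ++ c, a ≤ N - 1 := fun a ha =>
    le_of_mem_reflB (h ▸ mem_append.2 (mem_append.1 ha).symm)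
  have hrefl : reflB N w ≤ reflB N (z ++ c) := by
    simpa using (admissibleIneq_iff.1 hw.2.2.2 _ _ hsplit (by simpa using hz)).1
  have := reflB_le_reflB (by simp [hsplit, add_comm]) (fun a => le_of_mem_reflB) hrefl
  rwa [reflB_reflB hzc, reflB_reflB hw.le_pred_of_mem] at this

theorem Admissible.plusB_swap_lt (hw : Admissible N w) {x d : List ℕ} (hsplit : w = x ++ d)
    (hx : x ≠ []) (hd : d ≠ []) : plusB d ++ reflB N x < plusB w := by
  have hineq := admissibleIneq_iff.1 hw.2.2.2
  -- Equality would put the rotation `z ++ t` of `w` strictly below `w̄`.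
  refine lt_of_le_of_ne (hineq x d hsplit hd).2 fun heq => ?_
  set t := w.take d.length
  set z := w.drop d.length
  have hlen : w.length = x.length + d.length := by simp [hsplit]
  have hz : z ≠ [] := by
    simpa [z, ← length_pos_iff, hlen] using length_pos_iff.2 hx
  have hplus : plusB z = reflB N x := by
    rw [← take_append_drop d.length w, plusB_append _ hz] at heq
    exact (append_inj' heq (by simp [length_plusB hz, z, hlen])).2.symm
  have hlt : z ++ t < reflB N w := by
    rw [hsplit, reflB_append, ← hplus]
    exact append_lt_append_of_lt _ _ (length_plusB hz).symm (lt_plusB z)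
  exact absurd (hineq t z (take_append_drop _ _).symm hz).1 (not_le_of_gt hlt)

theorem Admissible.plusB_doubleB (hw : Admissible N w) :
    plusB (doubleB N w) = plusB w ++ reflB N w := by
  rw [doubleB, plusB_append _ (by simpa using plusB_ne_nil w), plusB_reflB_plusB hw.1 hw.2.2.1]

theorem Admissible.plusB_swap_lt_plusB_doubleB_left (hw : Admissible N w) {x d : List ℕ}
    (hsplit : w = x ++ d) (hx : x ≠ []) (hd : d ≠ []) :
    plusB (plusB d ++ reflB N (plusB w)) ++ reflB N x < plusB (doubleB N w) := by
  have hlhs : plusB (plusB d ++ reflB N (plusB w)) ++ reflB N x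
      = (plusB d ++ reflB N x) ++ (reflB N d ++ reflB N x) := by
    rw [plusB_append _ (by simpa using plusB_ne_nil w), plusB_reflB_plusB hw.1 hw.2.2.1, hsplit,
      reflB_append]
    simp only [append_assoc]
  rw [hlhs, hw.plusB_doubleB]
  refine append_lt_append_of_lt _ _ ?_ (hw.plusB_swap_lt hsplit hx hd)
  rw [length_plusB hw.1, hsplit]
  simp [length_plusB hd, add_comm]

theorem Admissible.plusB_swap_lt_plusB_doubleB_right (hw : Admissible N w) {c y : List ℕ}
    (h : reflB N (plusB w) = c ++ y) (hy : y ≠ []) :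
    plusB y ++ reflB N (plusB w ++ c) < plusB (doubleB N w) := by
  have hrefl : reflB N w = c ++ plusB y := by
    rw [← plusB_reflB_plusB hw.1 hw.2.2.1, h, plusB_append _ hy]
  have hlen : (plusB y ++ c).length = (plusB w).length := by
    simpa [length_plusB hy, add_comm, eq_comm] using congrArg length h
  have hlhs : plusB y ++ reflB N (plusB w ++ c) = (plusB y ++ c) ++ (y ++ reflB N c) := by
    rw [reflB_append, h]
    simp only [append_assoc]
  rw [hlhs, hw.plusB_doubleB]
  exact append_lt_append_of_lt _ _ hlen
    (lt_of_le_of_lt (hw.swap_le_of_reflB_eq_append hrefl (plusB_ne_nil y)) (lt_plusB w))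

theorem Admissible.plusB_swap_le_plusB_doubleB (hw : Admissible N w) {x y : List ℕ}
    (hsplit : doubleB N w = x ++ y) (hy : y ≠ []) :
    plusB y ++ reflB N x ≤ plusB (doubleB N w) := by
  rcases eq_or_ne x [] with rfl | hx
  · rw [hsplit, nil_append, reflB, map_nil, append_nil]
  refine le_of_lt ?_
  rcases append_eq_append_iff.1 hsplit with ⟨c, rfl, hc⟩ | ⟨d', hd', rfl⟩
  · exact hw.plusB_swap_lt_plusB_doubleB_right hc hy
  rcases eq_or_ne d' [] with rfl | hd'ne
  · rw [append_nil] at hd'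
    subst hd'
    have := hw.plusB_swap_lt_plusB_doubleB_right (c := []) rfl hy
    rwa [append_nil] at this
  obtain ⟨d, hd, hsplit', rfl⟩ := exists_of_plusB_eq_append hw.1 hd' hd'ne
  exact hw.plusB_swap_lt_plusB_doubleB_left hsplit' hx hd

theorem Admissible.le_pred_of_mem_plusB (hw : Admissible N w) : ∀ c ∈ plusB w, c ≤ N - 1 := by
  obtain ⟨U, b, rfl⟩ := (eq_nil_or_concat' w).resolve_left hw.1
  have hb : b < N - 1 := by simpa using hw.2.2.1
  simp only [plusB_concat, mem_append, mem_singleton]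
  rintro c (hc | rfl)
  exacts [hw.le_pred_of_mem c (mem_append_left _ hc), hb]

theorem admissible_doubleB (hw : Admissible N w) : Admissible N (doubleB N w) := by
  have hN : 2 ≤ N := by have := hw.2.2.1; omega
  have hrot : ∀ k, (doubleB N w).rotate k ≤ doubleB N w :=
    rotate_le_of_plusB_swap_le fun x y => hw.plusB_swap_le_plusB_doubleB
  refine ⟨by simp [doubleB, plusB_ne_nil], ?_, ?_, ?_⟩
  · simp only [doubleB, mem_append]
    rintro c (hc | hc)
    · have := hw.le_pred_of_mem_plusB c hc; omega
    · have := le_of_mem_reflB hc; omega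
  · obtain ⟨U, b, rfl⟩ := (eq_nil_or_concat' w).resolve_left hw.1
    have hlast : doubleB N (U ++ [b]) = (U ++ [b + 1] ++ reflB N U) ++ [N - 1 - (b + 1)] := by
      simp [doubleB, reflB]
    rw [hlast, getLast!_eq_getLast?_getD, getLast?_concat]
    simp only [Option.getD_some]
    omega
  · refine admissibleIneq_iff.2 fun x y hsplit hy => ⟨?_, hw.plusB_swap_le_plusB_doubleB hsplit hy⟩
    rw [← rotate_append_length_eq, ← hsplit]
    exact reflB_le_rotate_of_rotate_le hw.le_pred_of_mem_plusB hrot _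

theorem Admissible.rotate_le (hw : Admissible N w) (k : ℕ) : w.rotate k ≤ w :=
  rotate_le_of_plusB_swap_le (fun x y hs hy => (admissibleIneq_iff.1 hw.2.2.2 x y hs hy).2) k

theorem Admissible.iterate_doubleB (hw : Admissible N w) (n : ℕ) :
    Admissible N ((doubleB N)^[n] w) := by
  induction n with
  | zero => exact hw
  | succ n ih =>
    rw [Function.iterate_succ_apply']
    exact admissible_doubleB ih

end Admissible

theorem gtmBlock_succ (N : ℕ) (w : List ℕ) (n : ℕ) :
    gtmBlock N w (n + 1) = gtmBlock N (doubleB N w) n := by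
  induction n with
  | zero => simp [gtmBlock, doubleB, plusB_append _ (reflB_eq_nil.not.2 (plusB_ne_nil w))]
  | succ n ih => rw [gtmBlock.eq_2, ih, ← gtmBlock.eq_2]

theorem gtmBlock_eq_plusB_iterate (N : ℕ) (w : List ℕ) (n : ℕ) :
    gtmBlock N w n = plusB ((doubleB N)^[n] w) := by
  induction n generalizing w with
  | zero => rfl
  | succ n ih => rw [gtmBlock_succ, ih, Function.iterate_succ_apply]

theorem gtmBlock_append_reflB (N : ℕ) (w : List ℕ) (n : ℕ) :
    gtmBlock N w n ++ reflB N (gtmBlock N w n) = (doubleB N)^[n + 1] w := by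
  rw [gtmBlock_eq_plusB_iterate, Function.iterate_succ_apply']
  rfl

theorem shift_per (V : List ℕ) (i : ℕ) : shift (per V) i = per (V.rotate i) := by
  funext n
  rcases eq_or_ne V [] with rfl | hV
  · simp [shift, per]
  have hpos := length_pos_iff.2 hV
  simp only [shift, per, length_rotate]
  rw [getD_eq_getElem _ _ (Nat.mod_lt _ hpos),
    getD_eq_getElem _ _ (by simpa using Nat.mod_lt _ hpos), getElem_rotate]
  simp [Nat.add_mod]

theorem seqLe_per_of_le {u v : List ℕ} (hlen : u.length = v.length) (h : u ≤ v) :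
    seqLe (per u) (per v) := by
  rcases h.lt_or_eq with h | rfl
  · rcases List.lt_iff_exists.1 h with ⟨-, hlt⟩ | ⟨i, hu, hv, hpre, hlt⟩
    · exact absurd hlen hlt.ne
    left
    refine ⟨i, fun k hk => ?_, ?_⟩
    · simpa [per, Nat.mod_eq_of_lt, hk.trans hu, hk.trans hv, hlen] using hpre k hk
    · simpa [per, Nat.mod_eq_of_lt, hu, hv, hlen] using hlt
  · exact Or.inr rfl

theorem seqLe_shift_per_of_rotate_le {V : List ℕ} (h : ∀ k, V.rotate k ≤ V) (i : ℕ) :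
    seqLe (shift (per V) i) (per V) := by
  rw [shift_per]
  exact seqLe_per_of_le (length_rotate ..) (h i)

theorem stmt12_general (N : ℕ) (w : List ℕ) (hadm : Admissible N w) :
    ∀ n : ℕ, ∀ i : ℕ, 1 ≤ i →
      seqLe (shift (per (gtmBlock N w n ++ reflB N (gtmBlock N w n))) i)
        (per (gtmBlock N w n ++ reflB N (gtmBlock N w n))) := by
  intro n i _
  rw [gtmBlock_append_reflB]
  exact seqLe_shift_per_of_rotate_le (hadm.iterate_doubleB (n + 1)).rotate_le i

/-- Lemma 6.1 — `(θ_1⋯θ_{2^n p} reflection(θ_1⋯θ_{2^n p}))^∞`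
is shift-maximal for every `n`. -/
theorem stmt12 (N : ℕ) (hN : 2 ≤ N) (w : List ℕ) (hadm : Admissible N w) :
    ∀ n : ℕ, ∀ i : ℕ, 1 ≤ i →
      seqLe (shift (per (gtmBlock N w n ++ reflB N (gtmBlock N w n))) i)
        (per (gtmBlock N w n ++ reflB N (gtmBlock N w n))) :=
  stmt12_general N w hadm
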